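/- (Lemma 3.6, monotonicity of successive differences.) Suppose each step-size satisfies α_i < 2/L_i, and let {(x^k, d^k, z^k)} be generated by the NIDS iteration with d^k ∈ range(I − W) for all k. Then the sequence { ‖z^{k+1} − z^k‖²_{Λ⁻¹} + ‖d^{k+1} − d^k‖²_M }_k is monotonically nonincreasing: for all k, ‖z^{k+1} − z^k‖²_{Λ⁻¹} + ‖d^{k+1} − d^k‖²_M ≤ ‖z^k − z^{k−1}‖²_{Λ⁻¹} + ‖d^k − d^{k−1}‖²_M. -/

import Mathlib

open Matrix Filter Topology

noncomputable section

/-- Trace inner product `⟨x, y⟩ = tr(xᵀ y)` on `n × p` real matrices. -/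
def iprod {n p : ℕ} (x y : Matrix (Fin n) (Fin p) ℝ) : ℝ := (xᵀ * y).trace

/-- Weighted inner product `⟨x, y⟩_Q = tr(xᵀ Q y)`. -/
def iprodQ {n p : ℕ} (Q : Matrix (Fin n) (Fin n) ℝ) (x y : Matrix (Fin n) (Fin p) ℝ) : ℝ :=
  (xᵀ * Q * y).trace

/-- Weighted squared (semi)norm `‖x‖_Q² = tr(xᵀ Q x)`. -/
def nsq {n p : ℕ} (Q : Matrix (Fin n) (Fin n) ℝ) (x : Matrix (Fin n) (Fin p) ℝ) : ℝ :=
  iprodQ Q x x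

/-- `∇s(x)`: the matrix whose `i`-th row is the gradient field `g i` applied to the `i`-th
row of `x`. -/
def gradS {n p : ℕ} (g : Fin n → EuclideanSpace ℝ (Fin p) → EuclideanSpace ℝ (Fin p))
    (x : Matrix (Fin n) (Fin p) ℝ) : Matrix (Fin n) (Fin p) ℝ :=
  Matrix.of fun i => WithLp.equiv 2 (Fin p → ℝ) (g i ((WithLp.equiv 2 (Fin p → ℝ)).symm (x i)))

/-- `x ∈ range(A)`, i.e. `x = A y` for some `y ∈ ℝ^{n×p}`. -/
def InRange {n p : ℕ} (A : Matrix (Fin n) (Fin n) ℝ) (x : Matrix (Fin n) (Fin p) ℝ) : Prop :=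
  ∃ y : Matrix (Fin n) (Fin p) ℝ, x = A * y

/-- `B` is the Moore–Penrose pseudoinverse of `A`. -/
def IsMoorePenrose {n : ℕ} (A B : Matrix (Fin n) (Fin n) ℝ) : Prop :=
  A * B * A = A ∧ B * A * B = B ∧ (A * B)ᵀ = A * B ∧ (B * A)ᵀ = B * A

/-- `r(x) = Σᵢ rᵢ(xᵢ)` where `xᵢ` is the `i`-th row of `x`. -/
def rsum {n p : ℕ} (r : Fin n → (Fin p → ℝ) → ℝ) (x : Matrix (Fin n) (Fin p) ℝ) : ℝ :=
  ∑ i, r i (x i)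

/-- `q ∈ ∂r(x)`: subgradient of `rsum r` at `x` w.r.t. the trace inner product. -/
def IsSubgrad {n p : ℕ} (r : Fin n → (Fin p → ℝ) → ℝ) (x q : Matrix (Fin n) (Fin p) ℝ) : Prop :=
  ∀ y : Matrix (Fin n) (Fin p) ℝ, rsum r x + iprod q (y - x) ≤ rsum r y

/-- `t` is an eigenvalue of the real matrix `A`. -/
def IsEig {n : ℕ} (A : Matrix (Fin n) (Fin n) ℝ) (t : ℝ) : Prop :=
  ∃ v : Fin n → ℝ, v ≠ 0 ∧ A *ᵥ v = t • v

/-- The mixing matrix assumption: symmetry, null space of `I - W` is the span of the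
all-ones vector, and `2I ≽ W + I ≻ 0`. -/
def IsMixing {n : ℕ} (W : Matrix (Fin n) (Fin n) ℝ) : Prop :=
  Wᵀ = W ∧ (∀ v : Fin n → ℝ, (1 - W) *ᵥ v = 0 ↔ ∃ t : ℝ, v = fun _ => t) ∧
    (W + 1).PosDef ∧ ((2 : ℝ) • (1 : Matrix (Fin n) (Fin n) ℝ) - (W + 1)).PosSemidef

/-- `x` is a minimizer over `ℝ^{n×p}` of `u ↦ r(u) + ½‖u − z‖²_{Λ⁻¹}` where `Λ = diag α`. -/
def ProxMin {n p : ℕ} (r : Fin n → (Fin p → ℝ) → ℝ) (α : Fin n → ℝ)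
    (z x : Matrix (Fin n) (Fin p) ℝ) : Prop :=
  ∀ u : Matrix (Fin n) (Fin p) ℝ,
    rsum r x + 1 / 2 * nsq (Matrix.diagonal fun i => (α i)⁻¹) (x - z) ≤
      rsum r u + 1 / 2 * nsq (Matrix.diagonal fun i => (α i)⁻¹) (u - z)

/-- `(d, z)` is a fixed point of the NIDS iteration. -/
def NIDSFixed {n p : ℕ} (W : Matrix (Fin n) (Fin n) ℝ) (α : Fin n → ℝ) (c : ℝ)
    (g : Fin n → EuclideanSpace ℝ (Fin p) → EuclideanSpace ℝ (Fin p))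
    (r : Fin n → (Fin p → ℝ) → ℝ) (d z : Matrix (Fin n) (Fin p) ℝ) : Prop :=
  ∃ x : Matrix (Fin n) (Fin p) ℝ, ProxMin r α z x ∧
    d = d + c • ((1 - W) *
      ((2 : ℝ) • x - z - Matrix.diagonal α * gradS g x - Matrix.diagonal α * d)) ∧
    z = x - Matrix.diagonal α * gradS g x - Matrix.diagonal α * d

end


/-!
Subtract two consecutive NIDS steps: the differences `Δx, Δz, Δd` obey the same linear
recursion, with `∇s(x)` replaced by `Δg = ∇s(x^{k+1}) - ∇s(x^k)`. With `A = I - W` and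
`w = 2Δx - Δz - ΛΔg - ΛΔd` one has `Δd⁺ - Δd = c A w`. Since `Δd, Δd⁺ ∈ range A`, where
`A†` inverts `A`, the change of `‖Δd‖²_M` is `⟨Δd⁺ + Δd, Δx + Δz⁺ - Δz⟩`, and the change of
the whole energy is
  `-‖Δz⁺ - Δz + ΛΔg‖²_{Λ⁻¹} + (‖Δg‖²_Λ - 2⟨Δg, Δx⟩)`
  `  + 2 (‖Δx‖²_{Λ⁻¹} - ⟨Δx, Δz⟩_{Λ⁻¹}) - c (⟨A w, w⟩ - c ‖A w‖²_Λ)`.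
The second term is `≤ 0` by cocoercivity of `∇sᵢ` (Baillon–Haddad) and `αᵢ Lᵢ ≤ 2`, the
third by firm nonexpansiveness of the prox, and the last because `A - c AΛA` is congruent to
`R (I - c R)` with `R = Λ^{1/2} A Λ^{1/2}`, a product of commuting positive semidefinite
matrices.
-/

section TraceInner

variable {n p : ℕ}

lemma iprod_comm (x y : Matrix (Fin n) (Fin p) ℝ) : iprod x y = iprod y x := by
  rw [iprod, iprod, ← trace_transpose, transpose_mul, transpose_transpose]

lemma iprod_add_left (x y z : Matrix (Fin n) (Fin p) ℝ) :
    iprod (x + y) z = iprod x z + iprod y z := by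
  simp only [iprod, transpose_add, Matrix.add_mul, trace_add]

lemma iprod_add_right (x y z : Matrix (Fin n) (Fin p) ℝ) :
    iprod x (y + z) = iprod x y + iprod x z := by
  simp only [iprod, Matrix.mul_add, trace_add]

lemma iprod_sub_left (x y z : Matrix (Fin n) (Fin p) ℝ) :
    iprod (x - y) z = iprod x z - iprod y z := by
  simp only [iprod, transpose_sub, Matrix.sub_mul, trace_sub]

lemma iprod_sub_right (x y z : Matrix (Fin n) (Fin p) ℝ) :
    iprod x (y - z) = iprod x y - iprod x z := by
  simp only [iprod, Matrix.mul_sub, trace_sub]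

lemma iprod_smul_left (c : ℝ) (x y : Matrix (Fin n) (Fin p) ℝ) :
    iprod (c • x) y = c * iprod x y := by
  simp only [iprod, transpose_smul, Matrix.smul_mul, trace_smul, smul_eq_mul]

lemma iprod_smul_right (c : ℝ) (x y : Matrix (Fin n) (Fin p) ℝ) :
    iprod x (c • y) = c * iprod x y := by
  simp only [iprod, Matrix.mul_smul, trace_smul, smul_eq_mul]

lemma iprod_mul_left (Q : Matrix (Fin n) (Fin n) ℝ) (x y : Matrix (Fin n) (Fin p) ℝ) :
    iprod (Q * x) y = iprod x (Qᵀ * y) := by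
  rw [iprod, iprod, transpose_mul, Matrix.mul_assoc]

lemma iprod_mul_comm {Q : Matrix (Fin n) (Fin n) ℝ} (hQ : Qᵀ = Q)
    (x y : Matrix (Fin n) (Fin p) ℝ) : iprod x (Q * y) = iprod y (Q * x) := by
  rw [iprod_comm, iprod_mul_left, hQ]

lemma iprodQ_eq_iprod (Q : Matrix (Fin n) (Fin n) ℝ) (x y : Matrix (Fin n) (Fin p) ℝ) :
    iprodQ Q x y = iprod x (Q * y) := by
  rw [iprodQ, iprod, Matrix.mul_assoc]

lemma nsq_eq_iprod (Q : Matrix (Fin n) (Fin n) ℝ) (x : Matrix (Fin n) (Fin p) ℝ) :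
    nsq Q x = iprod x (Q * x) :=
  iprodQ_eq_iprod Q x x

lemma nsq_nonneg {Q : Matrix (Fin n) (Fin n) ℝ} (hQ : Q.PosSemidef)
    (x : Matrix (Fin n) (Fin p) ℝ) : 0 ≤ nsq Q x := by
  simpa [nsq, iprodQ] using (hQ.conjTranspose_mul_mul_same x).trace_nonneg

lemma nsq_sub_nsq {Q : Matrix (Fin n) (Fin n) ℝ} (hQ : Qᵀ = Q)
    (x y : Matrix (Fin n) (Fin p) ℝ) :
    nsq Q x - nsq Q y = iprod (x + y) (Q * (x - y)) := by
  rw [nsq_eq_iprod, nsq_eq_iprod, Matrix.mul_sub, iprod_add_left, iprod_sub_right,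
    iprod_sub_right, iprod_mul_comm hQ x y]
  ring

lemma nsq_sub_left (Q P : Matrix (Fin n) (Fin n) ℝ) (x : Matrix (Fin n) (Fin p) ℝ) :
    nsq (Q - P) x = nsq Q x - nsq P x := by
  rw [nsq_eq_iprod, nsq_eq_iprod, nsq_eq_iprod, Matrix.sub_mul, iprod_sub_right]

lemma nsq_smul_left (c : ℝ) (Q : Matrix (Fin n) (Fin n) ℝ) (x : Matrix (Fin n) (Fin p) ℝ) :
    nsq (c • Q) x = c * nsq Q x := by
  rw [nsq_eq_iprod, nsq_eq_iprod, Matrix.smul_mul, iprod_smul_right]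

end TraceInner

section Prox

variable {n p : ℕ} {r : Fin n → (Fin p → ℝ) → ℝ} {α : Fin n → ℝ}

lemma rsum_convex_comb_le (hr : ∀ i, ConvexOn ℝ Set.univ (r i)) {t : ℝ} (ht₀ : 0 ≤ t)
    (ht₁ : t ≤ 1) (a b : Matrix (Fin n) (Fin p) ℝ) :
    rsum r ((1 - t) • a + t • b) ≤ (1 - t) * rsum r a + t * rsum r b := by
  simp only [rsum, Finset.mul_sum, ← Finset.sum_add_distrib]
  exact Finset.sum_le_sum fun i _ =>
    (hr i).2 (Set.mem_univ _) (Set.mem_univ _) (by linarith) ht₀ (by ring)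

lemma nsq_convex_comb (Q : Matrix (Fin n) (Fin n) ℝ) (t : ℝ) (a b : Matrix (Fin n) (Fin p) ℝ) :
    nsq Q ((1 - t) • a + t • b) =
      (1 - t) * nsq Q a + t * nsq Q b - t * (1 - t) * nsq Q (b - a) := by
  simp only [nsq_eq_iprod, Matrix.mul_add, Matrix.mul_sub, Matrix.mul_smul, iprod_add_left,
    iprod_add_right, iprod_sub_left, iprod_sub_right, iprod_smul_left, iprod_smul_right]
  ring

lemma ProxMin.add_half_nsq_le (hr : ∀ i, ConvexOn ℝ Set.univ (r i))
    {z x : Matrix (Fin n) (Fin p) ℝ} (hx : ProxMin r α z x) (u : Matrix (Fin n) (Fin p) ℝ) :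
    rsum r x + 1 / 2 * nsq (diagonal fun i => (α i)⁻¹) (x - z) +
        1 / 2 * nsq (diagonal fun i => (α i)⁻¹) (u - x) ≤
      rsum r u + 1 / 2 * nsq (diagonal fun i => (α i)⁻¹) (u - z) := by
  set Q : Matrix (Fin n) (Fin n) ℝ := diagonal fun i => (α i)⁻¹
  set φ : ℝ → ℝ := fun t => rsum r x + 1 / 2 * nsq Q (x - z) + (1 - t) / 2 * nsq Q (u - x)
  have hφ : ∀ t ∈ Set.Ioo (0 : ℝ) 1, φ t ≤ rsum r u + 1 / 2 * nsq Q (u - z) := by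
    rintro t ⟨ht₀, ht₁⟩
    have hmin := hx ((1 - t) • x + t • u)
    rw [show (1 - t) • x + t • u - z = (1 - t) • (x - z) + t • (u - z) by module,
      nsq_convex_comb, show u - z - (x - z) = u - x by abel] at hmin
    have hconv := rsum_convex_comb_le hr ht₀.le ht₁.le x u
    refine le_of_mul_le_mul_left ?_ ht₀
    simp only [φ]
    linarith
  have hlim : Tendsto φ (𝓝[>] 0) (𝓝 (φ 0)) :=
    ((by fun_prop : Continuous φ).tendsto 0).mono_left nhdsWithin_le_nhds
  simpa [φ] using le_of_tendsto hlim (eventually_of_mem (Ioo_mem_nhdsGT one_pos) hφ)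

lemma ProxMin.nsq_sub_le_iprodQ (hr : ∀ i, ConvexOn ℝ Set.univ (r i))
    {z z' x x' : Matrix (Fin n) (Fin p) ℝ} (hx : ProxMin r α z x) (hx' : ProxMin r α z' x') :
    nsq (diagonal fun i => (α i)⁻¹) (x - x') ≤
      iprodQ (diagonal fun i => (α i)⁻¹) (x - x') (z - z') := by
  have h := hx.add_half_nsq_le hr x'
  have h' := hx'.add_half_nsq_le hr x
  have hQ := diagonal_transpose fun i => (α i)⁻¹
  simp only [nsq_eq_iprod, iprodQ_eq_iprod, Matrix.mul_sub, iprod_sub_left,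
    iprod_sub_right] at h h' ⊢
  linarith [iprod_mul_comm hQ x x', iprod_mul_comm hQ x z, iprod_mul_comm hQ x z',
    iprod_mul_comm hQ x' z, iprod_mul_comm hQ x' z', iprod_mul_comm hQ z z']

end Prox

section Cocoercivity

open scoped RealInnerProductSpace

variable {E : Type*} [NormedAddCommGroup E] [InnerProductSpace ℝ E] [CompleteSpace E]
  {f : E → ℝ} {g : E → E} {L : ℝ}

lemma HasGradientAt.hasDerivAt_comp_add_smul {f' v y : E} {t : ℝ}
    (hf : HasGradientAt f f' (v + t • y)) :
    HasDerivAt (fun s : ℝ => f (v + s • y)) ⟪f', y⟫ t := by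
  have hline : HasDerivAt (fun s : ℝ => v + s • y) y t := by
    simpa using ((hasDerivAt_id t).smul_const y).const_add v
  simpa [Function.comp_def] using hf.hasFDerivAt.comp_hasDerivAt t hline

lemma ConvexOn.add_inner_le_of_hasGradientAt (hf : ConvexOn ℝ Set.univ f) {f' v : E}
    (hv : HasGradientAt f f' v) (y : E) : f v + ⟪f', y - v⟫ ≤ f y := by
  have hline : ConvexOn ℝ Set.univ (fun t : ℝ => f (v + t • (y - v))) := by
    simpa [Function.comp_def, AffineMap.lineMap_apply, add_comm] using
      hf.comp_affineMap (AffineMap.lineMap v y)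
  have hd : HasDerivAt (fun t : ℝ => f (v + t • (y - v))) ⟪f', y - v⟫ 0 :=
    HasGradientAt.hasDerivAt_comp_add_smul (by simpa using hv)
  have hslope := hline.le_slope_of_hasDerivAt (Set.mem_univ 0) (Set.mem_univ 1) one_pos hd
  simp only [slope_def_field, one_smul, add_sub_cancel, zero_smul, add_zero, sub_zero,
    div_one] at hslope
  linarith

lemma le_add_inner_add_sq_of_lipschitz_gradient (hg : ∀ u, HasGradientAt f (g u) u)
    (hlip : ∀ u u', ‖g u - g u'‖ ≤ L * ‖u - u'‖) (v y : E) :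
    f y ≤ f v + ⟪g v, y - v⟫ + L / 2 * ‖y - v‖ ^ 2 := by
  set ψ : ℝ → ℝ := fun t =>
    f (v + t • (y - v)) - t * ⟪g v, y - v⟫ - t ^ 2 * (L / 2) * ‖y - v‖ ^ 2
  have hψ (t : ℝ) : HasDerivAt ψ
      (⟪g (v + t • (y - v)), y - v⟫ - ⟪g v, y - v⟫ - t * L * ‖y - v‖ ^ 2) t := by
    have hquad := ((hasDerivAt_pow 2 t).mul_const (L / 2)).mul_const (‖y - v‖ ^ 2)
    refine (((hg _).hasDerivAt_comp_add_smul).sub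
      ((hasDerivAt_id t).mul_const _)).sub hquad |>.congr_deriv ?_
    push_cast
    ring
  have hanti : AntitoneOn ψ (Set.Icc 0 1) := by
    refine antitoneOn_of_deriv_nonpos (convex_Icc 0 1)
      (fun t _ => (hψ t).continuousAt.continuousWithinAt)
      (fun t _ => (hψ t).differentiableAt.differentiableWithinAt) fun t ht => ?_
    rw [interior_Icc] at ht
    have hstep : ‖g (v + t • (y - v)) - g v‖ ≤ L * (t * ‖y - v‖) := by
      simpa [norm_smul, abs_of_pos ht.1] using hlip (v + t • (y - v)) v
    have hcs := real_inner_le_norm (g (v + t • (y - v)) - g v) (y - v)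
    rw [inner_sub_left] at hcs
    rw [(hψ t).deriv]
    nlinarith [mul_le_mul_of_nonneg_right hstep (norm_nonneg (y - v))]
  have h01 := hanti (Set.left_mem_Icc.2 zero_le_one) (Set.right_mem_Icc.2 zero_le_one) zero_le_one
  simp only [ψ, one_smul, add_sub_cancel, one_mul, one_pow, zero_smul, add_zero, zero_mul,
    sub_zero, ne_eq, OfNat.ofNat_ne_zero, not_false_eq_true, zero_pow, tsub_le_iff_right] at h01
  linarith

lemma ConvexOn.add_inner_add_norm_sq_div_le (hf : ConvexOn ℝ Set.univ f)
    (hg : ∀ u, HasGradientAt f (g u) u) (hL : 0 < L)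
    (hlip : ∀ u u', ‖g u - g u'‖ ≤ L * ‖u - u'‖) (v w : E) :
    f v + ⟪g v, w - v⟫ + ‖g w - g v‖ ^ 2 / (2 * L) ≤ f w := by
  -- `h` is minimal at `v`; compare `h v` with one gradient step `w - L⁻¹ ∇h(w)` from `w`
  set h : E → ℝ := fun u => f u - ⟪g v, u⟫
  have hgrad (u : E) : HasGradientAt h (g u - g v) u := by
    rw [hasGradientAt_iff_hasFDerivAt, map_sub]
    exact (hg u).hasFDerivAt.sub (InnerProductSpace.toDual ℝ E (g v)).hasFDerivAt
  have hmin (u : E) : h v ≤ h u := by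
    have := hf.add_inner_le_of_hasGradientAt (hg v) u
    simp only [h, inner_sub_right] at this ⊢
    linarith
  set D := g w - g v
  have hstep := le_add_inner_add_sq_of_lipschitz_gradient hgrad
    (fun u u' => by simpa using hlip u u') w (w - L⁻¹ • D)
  rw [sub_sub_cancel_left, inner_neg_right, real_inner_smul_right, real_inner_self_eq_norm_sq,
    norm_neg, norm_smul, Real.norm_of_nonneg (inv_nonneg.2 hL.le)] at hstep
  have hquad : L / 2 * (L⁻¹ * ‖D‖) ^ 2 = ‖D‖ ^ 2 / (2 * L) := by field_simp
  have hlin : L⁻¹ * ‖D‖ ^ 2 = 2 * (‖D‖ ^ 2 / (2 * L)) := by field_simp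
  have hv := hmin (w - L⁻¹ • D)
  simp only [h, inner_sub_right] at hv hstep ⊢
  linarith

lemma ConvexOn.norm_sub_sq_le_mul_inner (hf : ConvexOn ℝ Set.univ f)
    (hg : ∀ u, HasGradientAt f (g u) u) (hL : 0 < L)
    (hlip : ∀ u u', ‖g u - g u'‖ ≤ L * ‖u - u'‖) (v w : E) :
    ‖g v - g w‖ ^ 2 ≤ L * ⟪g v - g w, v - w⟫ := by
  have hvw := hf.add_inner_add_norm_sq_div_le hg hL hlip v w
  have hwv := hf.add_inner_add_norm_sq_div_le hg hL hlip w v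
  rw [norm_sub_rev] at hvw
  have hsum : ‖g v - g w‖ ^ 2 / L ≤ ⟪g v - g w, v - w⟫ := by
    have : ‖g v - g w‖ ^ 2 / L = 2 * (‖g v - g w‖ ^ 2 / (2 * L)) := by field_simp
    simp only [inner_sub_left, inner_sub_right] at hvw hwv ⊢
    linarith
  rwa [div_le_iff₀' hL] at hsum

end Cocoercivity

section Gradient

open scoped RealInnerProductSpace

variable {n p : ℕ}

lemma iprodQ_diagonal_eq_sum_inner (v : Fin n → ℝ) (a b : Matrix (Fin n) (Fin p) ℝ) :
    iprodQ (diagonal v) a b = ∑ i, v i * ⟪WithLp.toLp 2 (a i), WithLp.toLp 2 (b i)⟫ := by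
  simp only [iprodQ, trace, diag, mul_apply, transpose_apply, PiLp.inner_apply,
    RCLike.inner_apply, conj_trivial, Finset.mul_sum]
  rw [Finset.sum_comm]
  exact Finset.sum_congr rfl fun i _ => Finset.sum_congr rfl fun j _ => by
    simp [diagonal_apply]; ring

lemma iprod_eq_sum_inner (a b : Matrix (Fin n) (Fin p) ℝ) :
    iprod a b = ∑ i, ⟪WithLp.toLp 2 (a i), WithLp.toLp 2 (b i)⟫ := by
  simpa [iprodQ, iprod] using iprodQ_diagonal_eq_sum_inner (fun _ => (1 : ℝ)) a b

lemma toLp_gradS_sub (g : Fin n → EuclideanSpace ℝ (Fin p) → EuclideanSpace ℝ (Fin p))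
    (X X' : Matrix (Fin n) (Fin p) ℝ) (i : Fin n) :
    WithLp.toLp 2 ((gradS g X - gradS g X') i) =
      g i (WithLp.toLp 2 (X i)) - g i (WithLp.toLp 2 (X' i)) := by
  ext j
  simp [gradS]

lemma nsq_diagonal_gradS_sub_le {α L : Fin n → ℝ} (hL : ∀ i, 0 < L i)
    (hαL : ∀ i, α i ≤ 2 / L i) {s : Fin n → EuclideanSpace ℝ (Fin p) → ℝ}
    {g : Fin n → EuclideanSpace ℝ (Fin p) → EuclideanSpace ℝ (Fin p)}
    (hs : ∀ i, ConvexOn ℝ Set.univ (s i)) (hg : ∀ i v, HasGradientAt (s i) (g i v) v)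
    (hlip : ∀ i (v w : EuclideanSpace ℝ (Fin p)), ‖g i v - g i w‖ ≤ L i * ‖v - w‖)
    (X X' : Matrix (Fin n) (Fin p) ℝ) :
    nsq (diagonal α) (gradS g X - gradS g X') ≤ 2 * iprod (gradS g X - gradS g X') (X - X') := by
  rw [nsq, iprodQ_diagonal_eq_sum_inner, iprod_eq_sum_inner, Finset.mul_sum]
  refine Finset.sum_le_sum fun i _ => ?_
  set u := WithLp.toLp 2 (X i)
  set u' := WithLp.toLp 2 (X' i)
  rw [toLp_gradS_sub, show WithLp.toLp 2 ((X - X') i) = u - u' from rfl,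
    real_inner_self_eq_norm_sq]
  have hcoco := (hs i).norm_sub_sq_le_mul_inner (hg i) (hL i) (hlip i) u u'
  calc α i * ‖g i u - g i u'‖ ^ 2 ≤ 2 / L i * ‖g i u - g i u'‖ ^ 2 :=
        mul_le_mul_of_nonneg_right (hαL i) (sq_nonneg _)
    _ ≤ 2 / L i * (L i * ⟪g i u - g i u', u - u'⟫) :=
        mul_le_mul_of_nonneg_left hcoco (div_nonneg zero_le_two (hL i).le)
    _ = 2 * ⟪g i u - g i u', u - u'⟫ := by field_simp [(hL i).ne']

end Gradient

section Pseudoinverse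

variable {n p : ℕ} {A B : Matrix (Fin n) (Fin n) ℝ}

lemma InRange.sub {u v : Matrix (Fin n) (Fin p) ℝ} (hu : InRange A u) (hv : InRange A v) :
    InRange A (u - v) := by
  obtain ⟨y, rfl⟩ := hu
  obtain ⟨y', rfl⟩ := hv
  exact ⟨y - y', (Matrix.mul_sub A y y').symm⟩

lemma iprod_mul_pinv_mul (hA : Aᵀ = A) (hABA : A * B * A = A)
    {u : Matrix (Fin n) (Fin p) ℝ} (hu : InRange A u) (w : Matrix (Fin n) (Fin p) ℝ) :
    iprod u (B * (A * w)) = iprod u w := by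
  obtain ⟨y, rfl⟩ := hu
  rw [iprod_mul_left, iprod_mul_left, hA, ← Matrix.mul_assoc, ← Matrix.mul_assoc, hABA]

lemma nsq_inv_smul_pinv_sub_nsq (hA : Aᵀ = A) (hABA : A * B * A = A) {c : ℝ} (hc : c ≠ 0)
    {d dp : Matrix (Fin n) (Fin p) ℝ} (hd : InRange A d) (w : Matrix (Fin n) (Fin p) ℝ)
    (hdp : dp = d + c • (A * w)) :
    nsq (c⁻¹ • B) dp - nsq (c⁻¹ • B) d = iprod (dp + d) w := by
  have hAw : InRange A (A * w) := ⟨w, rfl⟩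
  have hBd : iprod (A * w) (B * d) = iprod d w := by
    obtain ⟨y, hy⟩ := hd
    rw [hy, iprod_mul_pinv_mul hA hABA hAw, iprod_mul_left, hA, iprod_comm]
  subst hdp
  rw [nsq_smul_left, nsq_smul_left, ← mul_sub]
  simp only [nsq_eq_iprod, Matrix.mul_add, Matrix.mul_smul, iprod_add_left,
    iprod_add_right, iprod_smul_left, iprod_smul_right, iprod_mul_pinv_mul hA hABA hd,
    iprod_mul_pinv_mul hA hABA hAw, hBd]
  field_simp
  ring

end Pseudoinverse

section Positivity

variable {n : ℕ}

open scoped MatrixOrder in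
lemma posSemidef_sub_smul_mul_diagonal_mul {A : Matrix (Fin n) (Fin n) ℝ} {α : Fin n → ℝ}
    {c : ℝ} (hα : ∀ i, 0 < α i) (hA : A.PosSemidef)
    (hcA : (1 - c • ((diagonal fun i => √(α i)) * A * diagonal fun i => √(α i))).PosSemidef) :
    (A - c • (A * diagonal α * A)).PosSemidef := by
  set S : Matrix (Fin n) (Fin n) ℝ := diagonal fun i => √(α i)
  set T : Matrix (Fin n) (Fin n) ℝ := diagonal fun i => (√(α i))⁻¹
  set R := S * A * S
  have hR : R.PosSemidef := by
    simpa [S, R] using hA.mul_mul_conjTranspose_same S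
  have hRR : (R * (1 - c • R)).PosSemidef := by
    rw [← nonneg_iff_posSemidef] at hR hcA ⊢
    exact Commute.mul_nonneg hR hcA
      ((Commute.one_right R).sub_right ((Commute.refl R).smul_right c))
  have hTS : T * S = 1 := by
    rw [diagonal_mul_diagonal, ← diagonal_one]
    exact congrArg diagonal (funext fun i => inv_mul_cancel₀ (Real.sqrt_pos.2 (hα i)).ne')
  have hSS : S * S = diagonal α := by
    rw [diagonal_mul_diagonal]
    exact congrArg diagonal (funext fun i => Real.mul_self_sqrt (hα i).le)
  have hconj : T * (R * (1 - c • R)) * T = A - c • (A * diagonal α * A) := by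
    have hST : S * T = 1 := mul_eq_one_comm.mp hTS
    simp only [R, Matrix.mul_sub, Matrix.sub_mul, Matrix.mul_one, Matrix.mul_smul,
      Matrix.smul_mul, ← Matrix.mul_assoc, hTS, Matrix.one_mul]
    simp only [Matrix.mul_assoc, hST, Matrix.mul_one]
    rw [← Matrix.mul_assoc S S, hSS]
  simpa [hconj, T] using hRR.mul_mul_conjTranspose_same T

end Positivity

section Energy

variable {n p : ℕ}

lemma nsq_sub_nsq_add_iprod_eq {Q P : Matrix (Fin n) (Fin n) ℝ} (hQ : Qᵀ = Q) (hP : Pᵀ = P)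
    (hQP : Q * P = 1) (x z zp g : Matrix (Fin n) (Fin p) ℝ) :
    nsq Q zp - nsq Q z + iprod ((2 : ℝ) • (Q * (x - zp)) - (2 : ℝ) • g) (x + zp - z) =
      -nsq Q (zp - z + P * g) + (nsq P g - 2 * iprod g x) + 2 * (nsq Q x - iprodQ Q x z) := by
  have hPQ : P * Q = 1 := mul_eq_one_comm.mp hQP
  have hPg (y : Matrix (Fin n) (Fin p) ℝ) : iprod (P * g) (Q * y) = iprod g y := by
    rw [iprod_mul_left, hP, ← Matrix.mul_assoc, hPQ, Matrix.one_mul]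
  rw [iprod_sub_left, iprod_smul_left, iprod_smul_left, iprod_mul_left, hQ]
  simp only [nsq_eq_iprod, iprodQ_eq_iprod, Matrix.mul_add, Matrix.mul_sub,
    ← Matrix.mul_assoc Q P, hQP, Matrix.one_mul, iprod_add_left, iprod_add_right,
    iprod_sub_left, iprod_sub_right, hPg]
  linarith [iprod_mul_comm hQ x z, iprod_mul_comm hQ x zp, iprod_mul_comm hQ zp z,
    iprod_comm g z, iprod_comm g zp, iprod_comm g (P * g)]

theorem nids_energy_step_le {A B : Matrix (Fin n) (Fin n) ℝ} {α : Fin n → ℝ} {c : ℝ}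
    (hα : ∀ i, 0 < α i) (hc : 0 < c) (hA : A.PosSemidef)
    (hcA : (1 - c • ((diagonal fun i => √(α i)) * A * diagonal fun i => √(α i))).PosSemidef)
    (hABA : A * B * A = A) {x z g d dp zp : Matrix (Fin n) (Fin p) ℝ} (hd : InRange A d)
    (hdp : dp = d + c • (A * ((2 : ℝ) • x - z - diagonal α * g - diagonal α * d)))
    (hzp : zp = x - diagonal α * g - diagonal α * dp)
    (hprox : nsq (diagonal fun i => (α i)⁻¹) x ≤ iprodQ (diagonal fun i => (α i)⁻¹) x z)
    (hgrad : nsq (diagonal α) g ≤ 2 * iprod g x) :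
    nsq (diagonal fun i => (α i)⁻¹) zp + nsq (c⁻¹ • B - diagonal α) dp ≤
      nsq (diagonal fun i => (α i)⁻¹) z + nsq (c⁻¹ • B - diagonal α) d := by
  set Λ : Matrix (Fin n) (Fin n) ℝ := diagonal α
  set Λinv : Matrix (Fin n) (Fin n) ℝ := diagonal fun i => (α i)⁻¹
  set w := (2 : ℝ) • x - z - Λ * g - Λ * d
  have hAs : Aᵀ = A := by simpa using hA.isHermitian.eq
  have hΛinvΛ : Λinv * Λ = 1 := by
    rw [diagonal_mul_diagonal, ← diagonal_one]
    exact congrArg diagonal (funext fun i => inv_mul_cancel₀ (hα i).ne')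
  have hdp_sub : dp - d = c • (A * w) := by rw [hdp]; abel
  have hdp_eq : dp = Λinv * (x - zp) - g := by
    rw [hzp, show x - (x - Λ * g - Λ * dp) = Λ * (g + dp) by rw [Matrix.mul_add]; abel,
      ← Matrix.mul_assoc, hΛinvΛ, Matrix.one_mul]
    abel
  have hsum : dp + d = (2 : ℝ) • (Λinv * (x - zp)) - (2 : ℝ) • g - c • (A * w) := by
    rw [← hdp_sub, ← smul_sub, ← hdp_eq]; module
  have hu : x + zp - z = w - c • (Λ * (A * w)) := by
    rw [hzp, hdp]; simp only [w, Matrix.mul_add, Matrix.mul_smul]; module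
  have hM : nsq (c⁻¹ • B - Λ) dp - nsq (c⁻¹ • B - Λ) d = iprod (dp + d) (x + zp - z) := by
    rw [nsq_sub_left, nsq_sub_left, sub_sub_sub_comm,
      nsq_inv_smul_pinv_sub_nsq hAs hABA hc.ne' hd w hdp,
      nsq_sub_nsq (Q := Λ) (diagonal_transpose α), hdp_sub, hu, Matrix.mul_smul, ← iprod_sub_right]
  have hpos : 0 ≤ iprod (A * w) (x + zp - z) := by
    have h := nsq_nonneg (posSemidef_sub_smul_mul_diagonal_mul hα hA hcA) w
    have hAΛA : iprod w (A * (Λ * (A * w))) = iprod (A * w) (Λ * (A * w)) := by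
      rw [iprod_mul_left, hAs]
    rw [hu, iprod_sub_right, iprod_smul_right, iprod_comm (A * w) w, ← hAΛA]
    simpa only [nsq_eq_iprod, Matrix.sub_mul, Matrix.smul_mul, iprod_sub_right,
      iprod_smul_right, Matrix.mul_assoc] using h
  have hid := nsq_sub_nsq_add_iprod_eq (diagonal_transpose _) (diagonal_transpose α) hΛinvΛ
    x z zp g
  have hΛinv_psd : Λinv.PosSemidef :=
    posSemidef_diagonal_iff.mpr fun i => inv_nonneg.mpr (hα i).le
  rw [hsum, iprod_sub_left, iprod_smul_left] at hM
  linarith [nsq_nonneg hΛinv_psd (zp - z + Λ * g), mul_nonneg hc.le hpos]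

end Energy

/-- Lemma 3.6: monotonicity of the successive differences. -/
theorem nids_successive_difference_monotone
    {n p : ℕ}
    (W : Matrix (Fin n) (Fin n) ℝ) (hW : IsMixing W)
    (α : Fin n → ℝ) (hα : ∀ i, 0 < α i) (c : ℝ) (hc : 0 < c)
    (hcW : ((1 : Matrix (Fin n) (Fin n) ℝ) -
      c • ((Matrix.diagonal fun i => Real.sqrt (α i)) * (1 - W) *
        Matrix.diagonal fun i => Real.sqrt (α i))).PosDef)
    (B : Matrix (Fin n) (Fin n) ℝ) (hB : IsMoorePenrose (1 - W) B)
    (L : Fin n → ℝ) (hL : ∀ i, 0 < L i)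
    (s : Fin n → EuclideanSpace ℝ (Fin p) → ℝ)
    (g : Fin n → EuclideanSpace ℝ (Fin p) → EuclideanSpace ℝ (Fin p))
    (hs : ∀ i, ConvexOn ℝ Set.univ (s i))
    (hg : ∀ i v, HasGradientAt (s i) (g i v) v)
    (hlip : ∀ i (v w : EuclideanSpace ℝ (Fin p)), ‖g i v - g i w‖ ≤ L i * ‖v - w‖)
    (r : Fin n → (Fin p → ℝ) → ℝ) (hr : ∀ i, ConvexOn ℝ Set.univ (r i))
    (hss : ∀ i, α i < 2 / L i)
    (x d z : ℕ → Matrix (Fin n) (Fin p) ℝ)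
    (hx : ∀ k, ProxMin r α (z k) (x k))
    (hdu : ∀ k, d (k + 1) = d k + c • ((1 - W) *
      ((2 : ℝ) • x k - z k - Matrix.diagonal α * gradS g (x k) - Matrix.diagonal α * d k)))
    (hzu : ∀ k, z (k + 1) =
      x k - Matrix.diagonal α * gradS g (x k) - Matrix.diagonal α * d (k + 1))
    (hdr : ∀ k, InRange (1 - W) (d k)) :
    ∀ k : ℕ,
      nsq (Matrix.diagonal fun i => (α i)⁻¹) (z (k + 2) - z (k + 1)) +
          nsq (c⁻¹ • B - Matrix.diagonal α) (d (k + 2) - d (k + 1)) ≤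
        nsq (Matrix.diagonal fun i => (α i)⁻¹) (z (k + 1) - z k) +
          nsq (c⁻¹ • B - Matrix.diagonal α) (d (k + 1) - d k) := by
  intro k
  have hA : (1 - W).PosSemidef := by
    simpa [two_smul, add_sub_add_right_eq_sub] using hW.2.2.2
  refine nids_energy_step_le hα hc hA hcW.posSemidef hB.1 ((hdr (k + 1)).sub (hdr k)) ?_ ?_
    ((hx (k + 1)).nsq_sub_le_iprodQ hr (hx k))
    (nsq_diagonal_gradS_sub_le hL (fun i => (hss i).le) hs hg hlip _ _)
  · rw [hdu (k + 1), hdu k]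
    simp only [Matrix.mul_add, Matrix.mul_sub, Matrix.mul_smul, smul_add, smul_sub]
    module
  · rw [hzu (k + 1), hzu k]
    simp only [Matrix.mul_sub]
    abel
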